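/- Let N be a quantum channel on d×d complex matrices and γ a positive-definite density matrix with N(γ) positive definite, with orthonormal eigenbases γ = ∑_i r_i |i⟩⟨i| and N(γ) = ∑_{k'} r'_{k'} |k'⟩⟨k'| (all r_i, r'_{k'} > 0). Suppose N is covariant with respect to γ, i.e., for every real θ and every matrix X: N(γ^{iθ} X γ^{−iθ}) = N(γ)^{iθ} N(X) N(γ)^{−iθ}. Then the transition amplitude T_{ij→k'l'} = ⟨k'| N(|i⟩⟨j|) |l'⟩ vanishes whenever r_j r'_{k'} ≠ r_i r'_{l'}; i.e., only transitions with vanishing imaginary information exchange (log(r_i/r_j) = log(r'_{k'}/r'_{l'})) have nonzero amplitude, so the quantum entropy production of a covariant channel has no imaginary part. -/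

import Mathlib

open Matrix
open scoped ComplexOrder

/-- ⟨v|A|w⟩ -/
noncomputable def braket {d : ℕ} (v : Fin d → ℂ) (A : Matrix (Fin d) (Fin d) ℂ)
    (w : Fin d → ℂ) : ℂ :=
  dotProduct (star v) (A.mulVec w)

/-- |v⟩⟨w| -/
noncomputable def ketbra {d : ℕ} (v w : Fin d → ℂ) : Matrix (Fin d) (Fin d) ℂ :=
  Matrix.vecMulVec v (star w)

/-- A quantum channel in Kraus form: N(X) = ∑ m, K m * X * (K m)ᴴ. -/
noncomputable def krausMap {d : ℕ} {ι : Type} [Fintype ι] (K : ι → Matrix (Fin d) (Fin d) ℂ)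
    (X : Matrix (Fin d) (Fin d) ℂ) : Matrix (Fin d) (Fin d) ℂ :=
  ∑ m, K m * X * (K m)ᴴ

/-- The adjoint map: N†(X) = ∑ m, (K m)ᴴ * X * K m. -/
noncomputable def krausAdj {d : ℕ} {ι : Type} [Fintype ι] (K : ι → Matrix (Fin d) (Fin d) ℂ)
    (X : Matrix (Fin d) (Fin d) ℂ) : Matrix (Fin d) (Fin d) ℂ :=
  ∑ m, (K m)ᴴ * X * K m

/-- An orthonormal family of vectors in ℂ^d. -/
def IsONB {d : ℕ} (e : Fin d → Fin d → ℂ) : Prop :=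
  ∀ i j, dotProduct (star (e i)) (e j) = if i = j then 1 else 0

/-- For A = ∑ i, r i • |e i⟩⟨e i| with `e` orthonormal and `r` positive, the complex
matrix power A^z = exp (z log A) is given by A^z = ∑ i, (r i)^z • |e i⟩⟨e i|. -/
noncomputable def projPow {d : ℕ} (r : Fin d → ℝ) (e : Fin d → Fin d → ℂ) (z : ℂ) :
    Matrix (Fin d) (Fin d) ℂ :=
  ∑ i, ((r i : ℂ) ^ z) • ketbra (e i) (e i)

open Complex

/-! The covariance condition applied to `|i⟩⟨j|` multiplies the amplitude `T = ⟨k'|N(|i⟩⟨j|)|l'⟩`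
by the phase `(r_i / r_j)^{iθ}` on one side and by `(r'_k / r'_l)^{iθ}` on the other. If `T ≠ 0`
the two phases `θ ↦ exp (iθ log (r_i / r_j))` and `θ ↦ exp (iθ log (r'_k / r'_l))` agree for all
real `θ`, which forces the two frequencies, hence the two ratios, to coincide. -/

section Spectral

variable {d : ℕ} {r : Fin d → ℝ} {e : Fin d → Fin d → ℂ}

lemma projPow_mulVec (he : IsONB e) (z : ℂ) (i : Fin d) :
    projPow r e z *ᵥ e i = ((r i : ℂ) ^ z) • e i := by
  simp [projPow, ketbra, sum_mulVec, smul_mulVec, vecMulVec_mulVec, he _ i]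

lemma star_vecMul_projPow (he : IsONB e) (z : ℂ) (j : Fin d) :
    star (e j) ᵥ* projPow r e z = ((r j : ℂ) ^ z) • star (e j) := by
  simp [projPow, ketbra, vecMul_sum, vecMul_smul, vecMul_vecMulVec, he j]

lemma projPow_mul_ketbra_mul_projPow (he : IsONB e) (z w : ℂ) (i j : Fin d) :
    projPow r e z * ketbra (e i) (e j) * projPow r e w =
      ((r i : ℂ) ^ z * (r j : ℂ) ^ w) • ketbra (e i) (e j) := by
  rw [ketbra, mul_vecMulVec, vecMulVec_mul, projPow_mulVec he, star_vecMul_projPow he,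
    smul_vecMulVec, vecMulVec_smul, smul_smul]

lemma braket_projPow_mul_mul_projPow (he : IsONB e) (z w : ℂ) (M : Matrix (Fin d) (Fin d) ℂ)
    (k l : Fin d) :
    braket (e k) (projPow r e z * M * projPow r e w) (e l) =
      (r k : ℂ) ^ z * (r l : ℂ) ^ w * braket (e k) M (e l) := by
  rw [braket, braket, ← mulVec_mulVec, projPow_mulVec he, mulVec_smul, ← mulVec_mulVec,
    dotProduct_smul, dotProduct_mulVec, star_vecMul_projPow he, smul_dotProduct,
    smul_eq_mul, smul_eq_mul]
  ring

end Spectral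

lemma krausMap_smul {d : ℕ} {ι : Type} [Fintype ι] (K : ι → Matrix (Fin d) (Fin d) ℂ) (c : ℂ)
    (X : Matrix (Fin d) (Fin d) ℂ) : krausMap K (c • X) = c • krausMap K X := by
  simp only [krausMap, Finset.smul_sum, Matrix.mul_smul, Matrix.smul_mul]

lemma braket_smul {d : ℕ} (v w : Fin d → ℂ) (c : ℂ) (M : Matrix (Fin d) (Fin d) ℂ) :
    braket v (c • M) w = c * braket v M w := by
  rw [braket, braket, smul_mulVec, dotProduct_smul, smul_eq_mul]

lemma ofReal_cpow_mul_I_mul_cpow_neg {a b : ℝ} (ha : 0 < a) (hb : 0 < b) (θ : ℝ) :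
    (a : ℂ) ^ (θ * I) * (b : ℂ) ^ (-(θ * I)) = exp (θ * Real.log (a / b) * I) := by
  rw [cpow_def_of_ne_zero (by exact_mod_cast ha.ne'), cpow_def_of_ne_zero
    (by exact_mod_cast hb.ne'), ← exp_add, Real.log_div ha.ne' hb.ne', ← ofReal_log ha.le,
    ← ofReal_log hb.le]
  push_cast
  ring_nf

lemma eq_of_forall_exp_mul_I_eq {s t : ℝ} (h : ∀ θ : ℝ, exp (θ * s * I) = exp (θ * t * I)) :
    s = t := by
  by_contra hst
  have hst' : ((s - t : ℝ) : ℂ) ≠ 0 := by exact_mod_cast sub_ne_zero.mpr hst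
  -- at `θ = π / (s - t)` the two sides differ by the factor `exp (π i) = -1`
  have h1 := h (Real.pi / (s - t))
  rw [← div_eq_one_iff_eq (exp_ne_zero _), ← exp_sub,
    show ((Real.pi / (s - t) : ℝ) : ℂ) * s * I - ((Real.pi / (s - t) : ℝ) : ℂ) * t * I
      = Real.pi * I by push_cast at hst' ⊢; field_simp, exp_pi_mul_I] at h1
  norm_num at h1

theorem covariant_channel_no_imaginary_entropy_production_general
    {d : ℕ} {ι : Type} [Fintype ι] (K : ι → Matrix (Fin d) (Fin d) ℂ)
    (r : Fin d → ℝ) (e : Fin d → Fin d → ℂ) (hr : ∀ i, 0 < r i) (he : IsONB e)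
    (r' : Fin d → ℝ) (f : Fin d → Fin d → ℂ) (hr' : ∀ k, 0 < r' k) (hf : IsONB f)
    (hcov : ∀ θ : ℝ, ∀ X : Matrix (Fin d) (Fin d) ℂ,
      krausMap K (projPow r e (θ * Complex.I) * X * projPow r e (-(θ * Complex.I))) =
        projPow r' f (θ * Complex.I) * krausMap K X * projPow r' f (-(θ * Complex.I))) :
    ∀ i j k l : Fin d, r j * r' k ≠ r i * r' l →
      braket (f k) (krausMap K (ketbra (e i) (e j))) (f l) = 0 := by
  intro i j k l hne
  by_contra hT
  have hphase : ∀ θ : ℝ,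
      exp (θ * Real.log (r i / r j) * I) = exp (θ * Real.log (r' k / r' l) * I) := by
    intro θ
    have h := congrArg (fun M => braket (f k) M (f l)) (hcov θ (ketbra (e i) (e j)))
    simp only [projPow_mul_ketbra_mul_projPow he, krausMap_smul, braket_smul,
      braket_projPow_mul_mul_projPow hf] at h
    rw [← ofReal_cpow_mul_I_mul_cpow_neg (hr i) (hr j),
      ← ofReal_cpow_mul_I_mul_cpow_neg (hr' k) (hr' l)]
    exact mul_right_cancel₀ hT h
  have hratio : r i / r j = r' k / r' l :=
    Real.log_injOn_pos (div_pos (hr i) (hr j)) (div_pos (hr' k) (hr' l))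
      (eq_of_forall_exp_mul_I_eq hphase)
  rw [div_eq_div_iff (hr j).ne' (hr' l).ne'] at hratio
  exact hne (by linarith)

/-- for a covariant channel (w.r.t. the reference state γ), the transition
amplitude T_{ij→k'l'} = ⟨k'|N(|i⟩⟨j|)|l'⟩ vanishes whenever r_j r'_k ≠ r_i r'_l, i.e. only
transitions with vanishing imaginary information exchange have nonzero amplitude. -/
theorem covariant_channel_no_imaginary_entropy_production
    {d : ℕ} {ι : Type} [Fintype ι] (K : ι → Matrix (Fin d) (Fin d) ℂ)
    (hK : ∑ m, (K m)ᴴ * K m = 1)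
    (r : Fin d → ℝ) (e : Fin d → Fin d → ℂ) (hr : ∀ i, 0 < r i) (he : IsONB e)
    (hrtr : ∑ i, r i = 1)
    (r' : Fin d → ℝ) (f : Fin d → Fin d → ℂ) (hr' : ∀ k, 0 < r' k) (hf : IsONB f)
    (hNγ : krausMap K (∑ i, ((r i : ℂ)) • ketbra (e i) (e i)) =
      ∑ k, ((r' k : ℂ)) • ketbra (f k) (f k))
    (hcov : ∀ θ : ℝ, ∀ X : Matrix (Fin d) (Fin d) ℂ,
      krausMap K (projPow r e (θ * Complex.I) * X * projPow r e (-(θ * Complex.I))) =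
        projPow r' f (θ * Complex.I) * krausMap K X * projPow r' f (-(θ * Complex.I))) :
    ∀ i j k l : Fin d, r j * r' k ≠ r i * r' l →
      braket (f k) (krausMap K (ketbra (e i) (e j))) (f l) = 0 :=
  covariant_channel_no_imaginary_entropy_production_general K r e hr he r' f hr' hf hcov
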